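/- Subject reduction for the disjunction permutation: if Γ ⊢ t[x₀.u₀, x₁.u₁]ξ : C where ξ is a single elimination (an applied argument, a projection, or a case elimination) and t[x₀.u₀, x₁.u₁] is a well-typed case distinction, then Γ ⊢ t[x₀.u₀ξ, x₁.u₁ξ] : C. -/
import Mathlib


/-- Simple types: base, function, product and sum types. -/
inductive Ty : Type
  | base : Ty
  | arrow : Ty → Ty → Ty
  | prod : Ty → Ty → Ty
  | sum : Ty → Ty → Ty

/-- Terms of the simply typed λ-calculus with products and sums (de Bruijn indices;
`inl B t` and `inr A t` carry the other summand as annotation). -/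
inductive Tm : Type
  | var : ℕ → Tm
  | lam : Ty → Tm → Tm
  | app : Tm → Tm → Tm
  | pair : Tm → Tm → Tm
  | proj : Bool → Tm → Tm
  | inl : Ty → Tm → Tm
  | inr : Ty → Tm → Tm
  | case : Tm → Tm → Tm → Tm

/-- Shift free de Bruijn variables `≥ c` up by one. -/
def shift (c : ℕ) : Tm → Tm
  | .var n => if n < c then .var n else .var (n + 1)
  | .lam A t => .lam A (shift (c + 1) t)
  | .app t u => .app (shift c t) (shift c u)
  | .pair t u => .pair (shift c t) (shift c u)
  | .proj b t => .proj b (shift c t)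
  | .inl B t => .inl B (shift c t)
  | .inr A t => .inr A (shift c t)
  | .case t u v => .case (shift c t) (shift (c + 1) u) (shift (c + 1) v)

/-- Capture-avoiding substitution of `s` for the variable `k`. -/
def subst (k : ℕ) (s : Tm) : Tm → Tm
  | .var n => if n < k then .var n else if n = k then s else .var (n - 1)
  | .lam A t => .lam A (subst (k + 1) (shift 0 s) t)
  | .app t u => .app (subst k s t) (subst k s u)
  | .pair t u => .pair (subst k s t) (subst k s u)
  | .proj b t => .proj b (subst k s t)
  | .inl B t => .inl B (subst k s t)
  | .inr A t => .inr A (subst k s t)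
  | .case t u v => .case (subst k s t) (subst (k + 1) (shift 0 s) u) (subst (k + 1) (shift 0 s) v)

/-- Standard typing judgment `Γ ⊢ t : A`. -/
inductive HasTy : List Ty → Tm → Ty → Prop
  | var {Γ n A} : Γ[n]? = some A → HasTy Γ (.var n) A
  | lam {Γ A B t} : HasTy (A :: Γ) t B → HasTy Γ (.lam A t) (Ty.arrow A B)
  | app {Γ A B t u} : HasTy Γ t (Ty.arrow A B) → HasTy Γ u A → HasTy Γ (.app t u) B
  | pair {Γ A B t u} : HasTy Γ t A → HasTy Γ u B → HasTy Γ (.pair t u) (Ty.prod A B)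
  | projL {Γ A B t} : HasTy Γ t (Ty.prod A B) → HasTy Γ (.proj false t) A
  | projR {Γ A B t} : HasTy Γ t (Ty.prod A B) → HasTy Γ (.proj true t) B
  | inl {Γ A B t} : HasTy Γ t A → HasTy Γ (.inl B t) (Ty.sum A B)
  | inr {Γ A B t} : HasTy Γ t B → HasTy Γ (.inr A t) (Ty.sum A B)
  | case {Γ A B C t u v} : HasTy Γ t (Ty.sum A B) → HasTy (A :: Γ) u C →
      HasTy (B :: Γ) v C → HasTy Γ (.case t u v) C


/-- A one-element stack (single elimination): an applied argument, a projection,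
or a case elimination. -/
inductive Elim : Type
  | arg : Tm → Elim
  | proj : Bool → Elim
  | cas : Tm → Tm → Elim

/-- Apply one elimination to a term. -/
def plug : Tm → Elim → Tm
  | t, .arg u => .app t u
  | t, .proj b => .proj b t
  | t, .cas u v => .case t u v

/-- Adjust the de Bruijn variables of an elimination when it is pushed under one
additional binder (the binder of a case branch). -/
def shiftElim : Elim → Elim
  | .arg w => .arg (shift 0 w)
  | .proj b => .proj b
  | .cas a b => .cas (shift 1 a) (shift 1 b)

lemma hasTy_shift {Γ₁ Γ₂ : List Ty} {X : Ty} {s : Tm} {A : Ty}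
    (h : HasTy (Γ₁ ++ Γ₂) s A) :
    HasTy (Γ₁ ++ X :: Γ₂) (shift Γ₁.length s) A := by
  generalize hΔ : Γ₁ ++ Γ₂ = Δ at h
  induction h generalizing Γ₁ with
  | var hn =>
    rename_i Γ n A
    subst hΔ
    simp only [shift]
    split
    · rename_i hlt
      refine .var ?_
      rw [List.getElem?_append] at hn ⊢
      simp only [if_pos hlt] at hn ⊢
      exact hn
    · rename_i hge
      have hlen : Γ₁.length ≤ n := by omega
      refine .var ?_
      rw [List.getElem?_append] at hn ⊢
      simp only [if_neg (by omega : ¬ n < Γ₁.length),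
        if_neg (by omega : ¬ n + 1 < Γ₁.length)] at hn ⊢
      rw [show n + 1 - Γ₁.length = (n - Γ₁.length) + 1 by omega]
      simpa using hn
  | lam _ ih => exact .lam (ih (Γ₁ := _ :: Γ₁) (by rw [List.cons_append, hΔ]))
  | app _ _ ih1 ih2 => exact .app (ih1 hΔ) (ih2 hΔ)
  | pair _ _ ih1 ih2 => exact .pair (ih1 hΔ) (ih2 hΔ)
  | projL _ ih => exact .projL (ih hΔ)
  | projR _ ih => exact .projR (ih hΔ)
  | inl _ ih => exact .inl (ih hΔ)
  | inr _ ih => exact .inr (ih hΔ)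
  | case _ _ _ ih1 ih2 ih3 =>
    exact .case (ih1 hΔ) (ih2 (Γ₁ := _ :: Γ₁) (by simp [hΔ]))
      (ih3 (Γ₁ := _ :: Γ₁) (by simp [hΔ]))

lemma hasTy_shift0 {Γ : List Ty} {X : Ty} {s : Tm} {A : Ty} (h : HasTy Γ s A) :
    HasTy (X :: Γ) (shift 0 s) A := hasTy_shift (Γ₁ := []) h

lemma hasTy_shift1 {Γ : List Ty} {D X : Ty} {s : Tm} {A : Ty} (h : HasTy (D :: Γ) s A) :
    HasTy (D :: X :: Γ) (shift 1 s) A := hasTy_shift (Γ₁ := [D]) h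

/-- Subject reduction for the disjunction permutation: if
`Γ ⊢ (t[x₀.u₀, x₁.u₁])ξ : C` for a single elimination `ξ`, then
`Γ ⊢ t[x₀.u₀ξ, x₁.u₁ξ] : C` (with `ξ` suitably shifted under the branch binders). -/
theorem disjunction_permutation_subject_reduction {Γ : List Ty} {t u₀ u₁ : Tm}
    {ξ : Elim} {C : Ty} (h : HasTy Γ (plug (Tm.case t u₀ u₁) ξ) C) :
    HasTy Γ (Tm.case t (plug u₀ (shiftElim ξ)) (plug u₁ (shiftElim ξ))) C := by
  cases ξ with
  | arg w =>
    cases h with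
    | app hc hw =>
      cases hc with
      | case ht hu hv =>
        exact .case ht (.app hu (hasTy_shift0 hw)) (.app hv (hasTy_shift0 hw))
  | proj b =>
    cases b with
    | false =>
      cases h with
      | projL hc =>
        cases hc with
        | case ht hu hv => exact .case ht (.projL hu) (.projL hv)
    | true =>
      cases h with
      | projR hc =>
        cases hc with
        | case ht hu hv => exact .case ht (.projR hu) (.projR hv)
  | cas a b =>
    cases h with
    | case hc ha hb =>
      cases hc with
      | case ht hu hv =>
        exact .case ht (.case hu (hasTy_shift1 ha) (hasTy_shift1 hb))
          (.case hv (hasTy_shift1 ha) (hasTy_shift1 hb))
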